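/- Let n and r be integers with 0 ≤ r and r + 1 < n, and set q = (n − r − 1)/(r + 1) > 0. Define L(a) = ∫_1^∞ (v^{2q} − 1)^{−1/2} · sinh(a) · (1 + v² sinh(a)²)^{−1/2} dv for a > 0. Then the total-height function a ↦ 2·L(a) is a continuous, strictly increasing bijection from (0, ∞) onto the open interval (0, π(r+1)/(n−r−1)). -/

import Mathlib

/-! With `s = sinh a` the integrand is `w(v) · s / √(1 + v²s²)`, where `w(v) = (v^{2q} - 1)^{-1/2}`.
For each `v > 1` the factor `s / √(1 + v²s²)` increases strictly in `s ≥ 0` and tends to its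
bound `1 / v`, so by dominated convergence `L` is continuous, strictly increasing, `L(0) = 0` and
`L(a) → ∫₁^∞ w(v) / v dv = π / (2q)`, the last integral being computed from the primitive
`q⁻¹ arctan √(v^{2q} - 1)`. The intermediate value theorem then gives the bijection onto
`(0, π / q) = (0, π(r+1)/(n-r-1))`. -/

/-- The half-height of the r-catenoid with neck radius `a` in `ℍⁿ × ℝ`. -/
noncomputable def catL (q a : ℝ) : ℝ :=
  ∫ v in Set.Ioi (1 : ℝ),
    (v ^ (2 * q) - 1) ^ (-(1 : ℝ) / 2) * Real.sinh a *
      (1 + v ^ 2 * Real.sinh a ^ 2) ^ (-(1 : ℝ) / 2)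

open Real MeasureTheory Set Filter Topology

theorem StrictMonoOn.bijOn_Ioi_Ioo_of_tendsto {α δ : Type*} [ConditionallyCompleteLinearOrder α]
    [TopologicalSpace α] [OrderTopology α] [DenselyOrdered α] [NoMaxOrder α] [LinearOrder δ]
    [TopologicalSpace δ] [OrderClosedTopology δ] {f : α → δ} {a : α} {ℓ : δ}
    (hmono : StrictMonoOn f (Ici a)) (hcont : ContinuousOn f (Ici a))
    (hlim : Tendsto f atTop (𝓝 ℓ)) : BijOn f (Ioi a) (Ioo (f a) ℓ) := by
  refine ⟨fun x hx => ⟨?_, ?_⟩, hmono.injOn.mono Ioi_subset_Ici_self, fun y hy => ?_⟩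
  · exact hmono self_mem_Ici (Ioi_subset_Ici_self hx) hx
  · obtain ⟨x', hxx'⟩ := exists_gt x
    have hx' : x' ∈ Ici a := le_of_lt (lt_trans hx hxx')
    refine (hmono (Ioi_subset_Ici_self hx) hx' hxx').trans_le (ge_of_tendsto hlim ?_)
    filter_upwards [eventually_ge_atTop x'] with z hz
    exact hmono.monotoneOn hx' (hx'.trans hz) hz
  · obtain ⟨b, hyb, hab⟩ :=
      ((hlim.eventually (eventually_gt_nhds hy.2)).and (eventually_gt_atTop a)).exists
    obtain ⟨c, hc, rfl⟩ :=
      intermediate_value_Ioo hab.le (hcont.mono Icc_subset_Ici_self) ⟨hy.1, hyb⟩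
    exact ⟨c, hc.1, rfl⟩

theorem setIntegral_lt_setIntegral_of_forall_lt {X : Type*} [MeasurableSpace X] {μ : Measure X}
    {s : Set X} {f g : X → ℝ} (hs : MeasurableSet s) (hμs : μ s ≠ 0) (hf : IntegrableOn f s μ)
    (hg : IntegrableOn g s μ) (hlt : ∀ x ∈ s, f x < g x) :
    ∫ x in s, f x ∂μ < ∫ x in s, g x ∂μ := by
  rw [← sub_pos, ← integral_sub hg hf,
    setIntegral_pos_iff_support_of_nonneg_ae (f := fun x => g x - f x) _ (hg.sub hf)]
  · have hsupp : s ⊆ Function.support fun x => g x - f x := fun x hx =>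
      (sub_pos.2 (hlt x hx)).ne'
    rwa [inter_eq_self_of_subset_right hsupp, pos_iff_ne_zero]
  · filter_upwards [ae_restrict_mem hs] with x hx using sub_nonneg.2 (hlt x hx).le

theorem Real.tendsto_sinh_atTop : Tendsto sinh atTop atTop :=
  tendsto_atTop_mono' _ ((eventually_ge_atTop 0).mono fun _ => self_le_sinh_iff.2) tendsto_id

theorem rpow_neg_half_eq_inv_sqrt {x : ℝ} (hx : 0 ≤ x) : x ^ (-(1 : ℝ) / 2) = (√x)⁻¹ := by
  rw [neg_div, rpow_neg hx, ← sqrt_eq_rpow]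

noncomputable def neckProfile (s v : ℝ) : ℝ := s * (1 + v ^ 2 * s ^ 2) ^ (-(1 : ℝ) / 2)

section neckProfile

variable {v : ℝ}

theorem neckProfile_eq_div_sqrt (s v : ℝ) : neckProfile s v = s / √(1 + v ^ 2 * s ^ 2) := by
  rw [neckProfile, rpow_neg_half_eq_inv_sqrt (by positivity), div_eq_mul_inv]

theorem continuous_neckProfile : Continuous (Function.uncurry neckProfile) := by
  unfold neckProfile
  have hbase : Continuous fun p : ℝ × ℝ => 1 + p.2 ^ 2 * p.1 ^ 2 := by fun_prop
  exact continuous_fst.mul (hbase.rpow_const fun p => Or.inl (by positivity : (0 : ℝ) < _).ne')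

theorem abs_neckProfile_le (hv : 0 < v) (s : ℝ) : |neckProfile s v| ≤ v⁻¹ := by
  have hsqrt : 0 < √(1 + v ^ 2 * s ^ 2) := sqrt_pos.2 (by positivity)
  rw [neckProfile_eq_div_sqrt, abs_div, abs_of_pos hsqrt, div_le_iff₀ hsqrt,
    ← div_eq_inv_mul, le_div_iff₀ hv, mul_comm, le_sqrt (by positivity) (by positivity), mul_pow,
    sq_abs]
  linarith

theorem strictMonoOn_neckProfile (v : ℝ) : StrictMonoOn (neckProfile · v) (Ici 0) := by
  intro s₁ hs₁ s₂ hs₂ h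
  have h₁ : 0 < √(1 + v ^ 2 * s₁ ^ 2) := sqrt_pos.2 (by positivity)
  have h₂ : 0 < √(1 + v ^ 2 * s₂ ^ 2) := sqrt_pos.2 (by positivity)
  simp only [neckProfile_eq_div_sqrt]
  rw [div_lt_div_iff₀ h₁ h₂]
  refine lt_of_pow_lt_pow_left₀ 2 (mul_nonneg (le_trans hs₁ h.le) h₁.le) ?_
  rw [mul_pow, mul_pow, sq_sqrt (by positivity), sq_sqrt (by positivity)]
  have : s₁ ^ 2 < s₂ ^ 2 := pow_lt_pow_left₀ h (mem_Ici.1 hs₁) two_ne_zero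
  nlinarith

theorem tendsto_neckProfile_atTop (hv : 0 < v) :
    Tendsto (neckProfile · v) atTop (𝓝 v⁻¹) := by
  have hlim : Tendsto (fun s : ℝ => (√((s ^ 2)⁻¹ + v ^ 2))⁻¹) atTop (𝓝 (√(0 + v ^ 2))⁻¹) :=
    ((((tendsto_pow_atTop two_ne_zero).inv_tendsto_atTop.add_const _).sqrt).inv₀
      (by positivity))
  rw [zero_add, sqrt_sq hv.le] at hlim
  refine hlim.congr' ?_
  filter_upwards [eventually_gt_atTop 0] with s hs
  have hfactor : 1 + v ^ 2 * s ^ 2 = s ^ 2 * ((s ^ 2)⁻¹ + v ^ 2) := by field_simp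
  rw [neckProfile_eq_div_sqrt, hfactor, sqrt_mul (sq_nonneg s), sqrt_sq hs.le, div_mul_eq_div_div,
    div_self hs.ne', one_div]

end neckProfile

noncomputable def heightWeight (q v : ℝ) : ℝ := (v ^ (2 * q) - 1) ^ (-(1 : ℝ) / 2)

section heightWeight

variable {q v : ℝ}

theorem rpow_two_mul_sub_one_pos (hq : 0 < q) (hv : 1 < v) : 0 < v ^ (2 * q) - 1 :=
  sub_pos.2 (one_lt_rpow hv (by positivity))

theorem heightWeight_pos (hq : 0 < q) (hv : 1 < v) : 0 < heightWeight q v :=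
  rpow_pos_of_pos (rpow_two_mul_sub_one_pos hq hv) _

theorem continuousOn_heightWeight (hq : 0 < q) : ContinuousOn (heightWeight q) (Ioi 1) := by
  intro v hv
  have hv0 : v ≠ 0 := (zero_lt_one.trans hv).ne'
  exact (((continuousAt_rpow_const v (2 * q) (Or.inl hv0)).sub continuousAt_const).rpow_const
    (Or.inl (rpow_two_mul_sub_one_pos hq hv).ne')).continuousWithinAt

noncomputable def heightWeightPrimitive (q v : ℝ) : ℝ := q⁻¹ * arctan √(v ^ (2 * q) - 1)

theorem continuous_heightWeightPrimitive (hq : 0 < q) : Continuous (heightWeightPrimitive q) := by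
  unfold heightWeightPrimitive
  have := continuous_rpow_const (by positivity : 0 ≤ 2 * q)
  fun_prop

theorem hasDerivAt_heightWeightPrimitive (hq : 0 < q) (hv : 1 < v) :
    HasDerivAt (heightWeightPrimitive q) (heightWeight q v * v⁻¹) v := by
  have hv0 : 0 < v := zero_lt_one.trans hv
  have hu := rpow_two_mul_sub_one_pos hq hv
  have hderiv := (((hasDerivAt_rpow_const (p := 2 * q) (Or.inl hv0.ne')).sub_const 1).sqrt
    hu.ne').arctan.const_mul q⁻¹
  refine hderiv.congr_deriv ?_
  rw [heightWeight, rpow_neg_half_eq_inv_sqrt hu.le, sq_sqrt hu.le, add_sub_cancel, rpow_sub hv0,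
    rpow_one]
  have := sqrt_pos.2 hu
  have := rpow_pos_of_pos hv0 (2 * q)
  field_simp

theorem tendsto_heightWeightPrimitive_atTop (hq : 0 < q) :
    Tendsto (heightWeightPrimitive q) atTop (𝓝 (π / (2 * q))) := by
  have hsqrt : Tendsto (fun v : ℝ => √(v ^ (2 * q) - 1)) atTop atTop :=
    tendsto_sqrt_atTop.comp
      (tendsto_atTop_add_const_right _ _ (tendsto_rpow_atTop (by positivity)))
  rw [show π / (2 * q) = q⁻¹ * (π / 2) by ring]
  exact ((tendsto_nhds_of_tendsto_nhdsWithin tendsto_arctan_atTop).comp hsqrt).const_mul q⁻¹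

theorem heightWeight_mul_inv_nonneg (hq : 0 < q) (hv : 1 < v) : 0 ≤ heightWeight q v * v⁻¹ :=
  mul_nonneg (heightWeight_pos hq hv).le (inv_nonneg.2 (zero_le_one.trans hv.le))

theorem integrableOn_heightWeight_mul_inv (hq : 0 < q) :
    IntegrableOn (fun v => heightWeight q v * v⁻¹) (Ioi 1) :=
  integrableOn_Ioi_deriv_of_nonneg (continuous_heightWeightPrimitive hq).continuousWithinAt
    (fun _ hv => hasDerivAt_heightWeightPrimitive hq hv)
    (fun _ hv => heightWeight_mul_inv_nonneg hq hv) (tendsto_heightWeightPrimitive_atTop hq)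

theorem integral_heightWeight_mul_inv (hq : 0 < q) :
    ∫ v in Ioi 1, heightWeight q v * v⁻¹ = π / (2 * q) := by
  rw [integral_Ioi_of_hasDerivAt_of_tendsto
    (continuous_heightWeightPrimitive hq).continuousWithinAt
    (fun _ hv => hasDerivAt_heightWeightPrimitive hq hv) (integrableOn_heightWeight_mul_inv hq)
    (tendsto_heightWeightPrimitive_atTop hq)]
  simp [heightWeightPrimitive]

end heightWeight

noncomputable def neckHeight (q s : ℝ) : ℝ := ∫ v in Ioi 1, heightWeight q v * neckProfile s v

theorem catL_eq_neckHeight_comp_sinh (q : ℝ) : catL q = neckHeight q ∘ sinh := by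
  ext a
  simp only [catL, neckHeight, heightWeight, neckProfile, Function.comp_apply, mul_assoc]

section neckHeight

variable {q : ℝ}

theorem norm_heightWeight_mul_neckProfile_le (hq : 0 < q) {v : ℝ} (hv : 1 < v) (s : ℝ) :
    ‖heightWeight q v * neckProfile s v‖ ≤ heightWeight q v * v⁻¹ := by
  rw [norm_mul, norm_of_nonneg (heightWeight_pos hq hv).le, norm_eq_abs]
  exact mul_le_mul_of_nonneg_left (abs_neckProfile_le (zero_lt_one.trans hv) s)
    (heightWeight_pos hq hv).le

theorem aestronglyMeasurable_heightWeight_mul_neckProfile (hq : 0 < q) (s : ℝ) :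
    AEStronglyMeasurable (fun v => heightWeight q v * neckProfile s v) (volume.restrict (Ioi 1)) :=
  ((continuousOn_heightWeight hq).mul
    (continuous_neckProfile.uncurry_left s).continuousOn).aestronglyMeasurable measurableSet_Ioi

theorem integrableOn_heightWeight_mul_neckProfile (hq : 0 < q) (s : ℝ) :
    IntegrableOn (fun v => heightWeight q v * neckProfile s v) (Ioi 1) :=
  (integrableOn_heightWeight_mul_inv hq).mono'
    (aestronglyMeasurable_heightWeight_mul_neckProfile hq s)
    ((ae_restrict_mem measurableSet_Ioi).mono fun _ hv =>
      norm_heightWeight_mul_neckProfile_le hq hv s)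

theorem continuous_neckHeight (hq : 0 < q) : Continuous (neckHeight q) :=
  continuous_of_dominated (aestronglyMeasurable_heightWeight_mul_neckProfile hq)
    (fun s => (ae_restrict_mem measurableSet_Ioi).mono fun _ hv =>
      norm_heightWeight_mul_neckProfile_le hq hv s)
    (integrableOn_heightWeight_mul_inv hq)
    (ae_of_all _ fun v => continuous_const.mul (continuous_neckProfile.uncurry_right v))

theorem strictMonoOn_neckHeight (hq : 0 < q) : StrictMonoOn (neckHeight q) (Ici 0) :=
  fun _ hs₁ _ hs₂ h => setIntegral_lt_setIntegral_of_forall_lt measurableSet_Ioi (by simp)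
    (integrableOn_heightWeight_mul_neckProfile hq _)
    (integrableOn_heightWeight_mul_neckProfile hq _) fun v hv =>
      mul_lt_mul_of_pos_left (strictMonoOn_neckProfile v hs₁ hs₂ h) (heightWeight_pos hq hv)

theorem tendsto_neckHeight_atTop (hq : 0 < q) :
    Tendsto (neckHeight q) atTop (𝓝 (π / (2 * q))) := by
  rw [← integral_heightWeight_mul_inv hq]
  exact tendsto_integral_filter_of_dominated_convergence _
    (Eventually.of_forall (aestronglyMeasurable_heightWeight_mul_neckProfile hq))
    (Eventually.of_forall fun s => (ae_restrict_mem measurableSet_Ioi).mono fun _ hv =>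
      norm_heightWeight_mul_neckProfile_le hq hv s)
    (integrableOn_heightWeight_mul_inv hq)
    ((ae_restrict_mem measurableSet_Ioi).mono fun v hv =>
      (tendsto_neckProfile_atTop (zero_lt_one.trans hv)).const_mul _)

end neckHeight

theorem catL_zero (q : ℝ) : catL q 0 = 0 := by
  simp [catL]

section catL

variable {q : ℝ}

theorem strictMonoOn_catL (hq : 0 < q) : StrictMonoOn (catL q) (Ici 0) := by
  rw [catL_eq_neckHeight_comp_sinh]
  exact (strictMonoOn_neckHeight hq).comp (sinh_strictMono.strictMonoOn _)
    fun _ ha => sinh_nonneg_iff.2 ha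

theorem continuous_catL (hq : 0 < q) : Continuous (catL q) := by
  rw [catL_eq_neckHeight_comp_sinh]
  exact (continuous_neckHeight hq).comp continuous_sinh

theorem tendsto_catL_atTop (hq : 0 < q) : Tendsto (catL q) atTop (𝓝 (π / (2 * q))) := by
  rw [catL_eq_neckHeight_comp_sinh]
  exact (tendsto_neckHeight_atTop hq).comp tendsto_sinh_atTop

end catL

/-- For integers `0 ≤ r`, `r + 1 < n` and `q = (n-r-1)/(r+1)`,
the total-height function `a ↦ 2 L(a)` is a continuous strictly increasing bijection
from `(0, ∞)` onto `(0, π(r+1)/(n-r-1))`. -/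
theorem stmt_13 (n r : ℤ) (hr : 0 ≤ r) (hrn : r + 1 < n)
    (q : ℝ) (hq : q = ((n : ℝ) - r - 1) / ((r : ℝ) + 1)) :
    StrictMonoOn (fun a => 2 * catL q a) (Set.Ioi 0) ∧
    ContinuousOn (fun a => 2 * catL q a) (Set.Ioi 0) ∧
    Set.BijOn (fun a => 2 * catL q a) (Set.Ioi 0)
      (Set.Ioo 0 (Real.pi * ((r : ℝ) + 1) / ((n : ℝ) - r - 1))) := by
  have hr1 : (0 : ℝ) < r + 1 := by positivity
  have hnr : (0 : ℝ) < n - r - 1 := by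
    have : (r : ℝ) + 1 < n := by exact_mod_cast hrn
    linarith
  have hq0 : 0 < q := hq ▸ div_pos hnr hr1
  have hheight : π * (r + 1) / (n - r - 1) = 2 * (π / (2 * q)) := by
    rw [hq]
    field_simp
  have hmono : StrictMonoOn (fun a => 2 * catL q a) (Ici 0) := fun _ ha _ hb hab =>
    mul_lt_mul_of_pos_left (strictMonoOn_catL hq0 ha hb hab) two_pos
  have hcont : Continuous (fun a => 2 * catL q a) := continuous_const.mul (continuous_catL hq0)
  have hbij := hmono.bijOn_Ioi_Ioo_of_tendsto hcont.continuousOn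
    ((tendsto_catL_atTop hq0).const_mul 2)
  simp only [catL_zero, mul_zero] at hbij
  rw [hheight]
  exact ⟨hmono.mono Ioi_subset_Ici_self, hcont.continuousOn, hbij⟩
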